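/- arXiv:2110.07212 — 4 statements merged into one kernel-verified Lean document; each statement's English description precedes it below -/
import Mathlib

section
/- Let p > 2 be a real number and let ℓ > 0. Then there exists a function ṽ : [0, ℓ] → ℝ, twice continuously differentiable on (0, ℓ) and continuous on [0, ℓ], such that ṽ > 0 on (0, ℓ), ṽ(0) = ṽ(ℓ) = 0, and -ṽ''(x) + ṽ(x) = ṽ(x)^(p-1) for all x ∈ (0, ℓ). -/
open Real MeasureTheory intervalIntegral Set Filter Topology

/-- Gluing lemma: derivative at an interior exceptional point. -/
theorem stmt15_glue {f g : ℝ → ℝ} {a b c : ℝ} (hc : c ∈ Set.Ioo a b)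
    (hd : ∀ y ∈ Set.Ioo a b, y ≠ c → HasDerivAt f (g y) y)
    (hf : ContinuousAt f c) (hg : ContinuousAt g c) : HasDerivAt f (g c) c := by
  have hIoocb : Set.Ioo c b ∈ 𝓝[>] c := Ioo_mem_nhdsGT_of_mem ⟨le_refl c, hc.2⟩
  have hIooac : Set.Ioo a c ∈ 𝓝[<] c := Ioo_mem_nhdsLT_of_mem ⟨hc.1, le_refl c⟩
  have A : HasDerivWithinAt f (g c) (Set.Ici c) c := by
    have diff : DifferentiableOn ℝ f (Set.Ioo c b) := fun y hy =>
      (hd y ⟨hc.1.trans hy.1, hy.2⟩ (ne_of_gt hy.1)).differentiableAt.differentiableWithinAt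
    apply hasDerivWithinAt_Ici_of_tendsto_deriv diff hf.continuousWithinAt hIoocb
    have : Tendsto g (𝓝[>] c) (𝓝 (g c)) := tendsto_inf_left hg
    apply this.congr'
    filter_upwards [hIoocb] with y hy
    exact ((hd y ⟨hc.1.trans hy.1, hy.2⟩ (ne_of_gt hy.1)).deriv).symm
  have B : HasDerivWithinAt f (g c) (Set.Iic c) c := by
    have diff : DifferentiableOn ℝ f (Set.Ioo a c) := fun y hy =>
      (hd y ⟨hy.1, hy.2.trans hc.2⟩ (ne_of_lt hy.2)).differentiableAt.differentiableWithinAt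
    apply hasDerivWithinAt_Iic_of_tendsto_deriv diff hf.continuousWithinAt hIooac
    have : Tendsto g (𝓝[<] c) (𝓝 (g c)) := tendsto_inf_left hg
    apply this.congr'
    filter_upwards [hIooac] with y hy
    exact ((hd y ⟨hy.1, hy.2.trans hc.2⟩ (ne_of_lt hy.2)).deriv).symm
  have := B.union A
  rwa [Set.Iic_union_Ici, hasDerivWithinAt_univ] at this

noncomputable def stmt15_h (p t s : ℝ) : ℝ := t * (1 - s ^ p) - (1 - s ^ 2)

noncomputable def stmt15_f (p t s : ℝ) : ℝ := (Real.sqrt (stmt15_h p t s))⁻¹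

theorem stmt15_h_cont (p t : ℝ) (hp : 0 ≤ p) : Continuous (stmt15_h p t) := by
  unfold stmt15_h
  have : Continuous fun s : ℝ => s ^ p := Real.continuous_rpow_const hp
  continuity

theorem stmt15_rpow_le_sq {p s : ℝ} (hp : 2 ≤ p) (h0 : 0 ≤ s) (h1 : s ≤ 1) :
    s ^ p ≤ s ^ (2 : ℕ) := by
  rcases h0.eq_or_lt with h | h
  · rw [← h]
    rw [Real.zero_rpow (by linarith)]
    positivity
  · rw [← Real.rpow_natCast s 2]
    exact Real.rpow_le_rpow_of_exponent_ge h h1 (by exact_mod_cast hp)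

theorem stmt15_h_lower {p t s : ℝ} (hp : 2 ≤ p) (ht : 1 ≤ t) (h0 : 0 ≤ s) (h1 : s ≤ 1) :
    (t - 1) * (1 - s) ≤ stmt15_h p t s := by
  have key := stmt15_rpow_le_sq hp h0 h1
  unfold stmt15_h
  nlinarith [mul_le_mul_of_nonneg_left key (by linarith : (0:ℝ) ≤ t),
    mul_nonneg (mul_nonneg (by linarith : (0:ℝ) ≤ t - 1) (by linarith : (0:ℝ) ≤ 1 - s)) h0]

theorem stmt15_h_pos {p t s : ℝ} (hp : 2 ≤ p) (ht : 1 < t) (h0 : 0 ≤ s) (h1 : s < 1) :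
    0 < stmt15_h p t s :=
  lt_of_lt_of_le (by nlinarith) (stmt15_h_lower hp ht.le h0 h1.le)

theorem stmt15_h_one (p t : ℝ) : stmt15_h p t 1 = 0 := by simp [stmt15_h]

theorem stmt15_h_upper {p t s : ℝ} (ht : 1 ≤ t) (h0 : 0 ≤ s) :
    stmt15_h p t s ≤ (Real.sqrt (t - 1) + s) ^ 2 := by
  have h1 : Real.sqrt (t - 1) ^ 2 = t - 1 := Real.sq_sqrt (by linarith)
  have h2 : (0:ℝ) ≤ s ^ p := Real.rpow_nonneg h0 p
  have h3 : (0:ℝ) ≤ Real.sqrt (t - 1) := Real.sqrt_nonneg _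
  unfold stmt15_h
  nlinarith

theorem stmt15_sqrt_inv_eq (y : ℝ) : (Real.sqrt y)⁻¹ = y ^ (-(1/2) : ℝ) := by
  rcases lt_trichotomy y 0 with h | h | h
  · rw [Real.sqrt_eq_zero_of_nonpos h.le, Real.rpow_def_of_neg h]
    have h2 : (-(1/2) : ℝ) * π = -(π/2) := by ring
    rw [h2, Real.cos_neg, Real.cos_pi_div_two, mul_zero, inv_zero]
  · subst h
    rw [Real.sqrt_zero, inv_zero, Real.zero_rpow (by norm_num)]
  · rw [Real.sqrt_eq_rpow, ← Real.rpow_neg h.le]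

theorem stmt15_bound_int : IntervalIntegrable (fun s => (Real.sqrt (1 - s))⁻¹) volume 0 1 := by
  have h1 : IntervalIntegrable (fun x : ℝ => x ^ (-(1/2) : ℝ)) volume 0 1 :=
    intervalIntegrable_rpow' (by norm_num)
  have h2 := h1.comp_sub_left 1
  simp only [sub_zero, sub_self] at h2
  have h2' := h2.symm
  apply h2'.congr
  · intro s _; dsimp only
    rw [stmt15_sqrt_inv_eq]

theorem stmt15_f_nonneg (p t s : ℝ) : 0 ≤ stmt15_f p t s := by
  unfold stmt15_f; positivity

theorem stmt15_f_bound {p t c s : ℝ} (hp : 2 ≤ p) (ht : 1 < t) (hc : 0 < c) (hct : c ≤ t - 1)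
    (h0 : 0 ≤ s) (h1 : s ≤ 1) :
    stmt15_f p t s ≤ (Real.sqrt c)⁻¹ * (Real.sqrt (1 - s))⁻¹ := by
  rw [← mul_inv, ← Real.sqrt_mul hc.le]
  rcases h1.eq_or_lt with h | h
  · subst h
    rw [stmt15_f, stmt15_h_one, Real.sqrt_zero, inv_zero]
    positivity
  · have hlow : c * (1 - s) ≤ stmt15_h p t s :=
      le_trans (by nlinarith) (stmt15_h_lower hp ht.le h0 h1)
    have hpos : 0 < Real.sqrt (c * (1 - s)) := Real.sqrt_pos.mpr (by nlinarith)
    exact inv_anti₀ hpos (Real.sqrt_le_sqrt hlow)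

theorem stmt15_f_meas (p t : ℝ) (hp : 0 ≤ p) (μ : Measure ℝ) :
    AEStronglyMeasurable (stmt15_f p t) μ := by
  have : Continuous fun s => Real.sqrt (stmt15_h p t s) :=
    Real.continuous_sqrt.comp (stmt15_h_cont p t hp)
  exact (this.measurable.inv).aestronglyMeasurable

theorem stmt15_f_int {p t : ℝ} (hp : 2 ≤ p) (ht : 1 < t) :
    IntervalIntegrable (stmt15_f p t) volume 0 1 := by
  apply IntervalIntegrable.mono_fun
    (stmt15_bound_int.const_mul (Real.sqrt (t-1))⁻¹)
    (stmt15_f_meas p t (by linarith) _)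
  rw [Filter.EventuallyLE, ae_restrict_iff' measurableSet_uIoc]
  filter_upwards with s hs
  rw [Set.uIoc_of_le (by norm_num : (0:ℝ) ≤ 1)] at hs
  have hb := stmt15_f_bound hp ht (by linarith : (0:ℝ) < t - 1) le_rfl hs.1.le hs.2
  rw [Real.norm_eq_abs, Real.norm_eq_abs, abs_of_nonneg (stmt15_f_nonneg p t s),
    abs_of_nonneg (by positivity)]
  exact hb

noncomputable def stmt15_Phi (p t : ℝ) : ℝ := ∫ s in (0:ℝ)..1, stmt15_f p t s

theorem stmt15_Phi_cont {p t₀ : ℝ} (hp : 2 ≤ p) (ht : 1 < t₀) :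
    ContinuousAt (stmt15_Phi p) t₀ := by
  have hc : (0:ℝ) < (t₀ - 1)/2 := by linarith
  apply intervalIntegral.continuousAt_of_dominated_interval
    (bound := fun s => (Real.sqrt ((t₀-1)/2))⁻¹ * (Real.sqrt (1 - s))⁻¹)
  · filter_upwards with t
    exact stmt15_f_meas p t (by linarith) _
  · have hev : Set.Ioi ((t₀+1)/2) ∈ 𝓝 t₀ := Ioi_mem_nhds (by linarith)
    filter_upwards [hev] with t htm
    rw [Set.mem_Ioi] at htm
    filter_upwards with s hs
    rw [Set.uIoc_of_le (by norm_num : (0:ℝ) ≤ 1)] at hs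
    rw [Real.norm_eq_abs, abs_of_nonneg (stmt15_f_nonneg p t s)]
    exact stmt15_f_bound hp (by linarith) hc (by linarith) hs.1.le hs.2
  · exact stmt15_bound_int.const_mul _
  · filter_upwards with s hs
    rw [Set.uIoc_of_le (by norm_num : (0:ℝ) ≤ 1)] at hs
    rcases hs.2.eq_or_lt with h | h
    · rw [h]
      have heq : (fun t => stmt15_f p t 1) = fun _ => (0:ℝ) := by
        funext u
        rw [stmt15_f, stmt15_h_one, Real.sqrt_zero, inv_zero]
      rw [heq]
      exact continuousAt_const
    · have hpos : 0 < stmt15_h p t₀ s := stmt15_h_pos hp ht hs.1.le h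
      have hcont : ContinuousAt (fun t => stmt15_h p t s) t₀ := by
        unfold stmt15_h
        fun_prop
      apply ContinuousAt.inv₀
      · exact Real.continuous_sqrt.continuousAt.comp hcont
      · exact ne_of_gt (Real.sqrt_pos.mpr hpos)

theorem stmt15_Phi_le {p t : ℝ} (hp : 2 ≤ p) (ht : 1 < t) :
    stmt15_Phi p t ≤ (Real.sqrt (t-1))⁻¹ * ∫ s in (0:ℝ)..1, (Real.sqrt (1-s))⁻¹ := by
  rw [← intervalIntegral.integral_const_mul]
  apply intervalIntegral.integral_mono_on (by norm_num) (stmt15_f_int hp ht)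
    (stmt15_bound_int.const_mul _)
  intro s hs
  exact stmt15_f_bound hp ht (by linarith) le_rfl hs.1 hs.2

theorem stmt15_Phi_ge {p t : ℝ} (hp : 2 ≤ p) (ht : 1 < t) :
    Real.log ((Real.sqrt (t-1) + 1) / Real.sqrt (t-1)) ≤ stmt15_Phi p t := by
  set c := Real.sqrt (t-1) with hc
  have hc0 : 0 < c := Real.sqrt_pos.mpr (by linarith)
  have hint : IntervalIntegrable (fun s : ℝ => (c + s)⁻¹) volume 0 1 := by
    apply ContinuousOn.intervalIntegrable
    apply ContinuousOn.inv₀ (by fun_prop)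
    intro s hs
    rw [Set.uIcc_of_le (by norm_num : (0:ℝ) ≤ 1)] at hs
    have := hs.1
    positivity
  have hval : (∫ s in (0:ℝ)..1, (c + s)⁻¹) = Real.log ((c+1)/c) := by
    have h1 := intervalIntegral.integral_comp_add_left (a := (0:ℝ)) (b := 1)
      (fun x : ℝ => x⁻¹) c
    rw [h1, add_zero]
    apply integral_inv
    rw [Set.uIcc_of_le (by linarith)]
    rintro ⟨h0, -⟩
    linarith
  have hae : (fun s : ℝ => (c + s)⁻¹) ≤ᵐ[volume.restrict (Set.Icc (0:ℝ) 1)] stmt15_f p t := by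
    have hne : ∀ᵐ s ∂volume.restrict (Set.Icc (0:ℝ) 1), s ≠ 1 := by
      rw [ae_iff]
      have h2 : {s : ℝ | ¬ s ≠ 1} = {1} := by ext; simp
      rw [h2, Measure.restrict_apply (measurableSet_singleton 1)]
      exact measure_mono_null Set.inter_subset_left (Real.volume_singleton)
    filter_upwards [hne, ae_restrict_mem measurableSet_Icc] with s hs1 hsm
    have h1 : s < 1 := lt_of_le_of_ne hsm.2 hs1
    have hpos := stmt15_h_pos hp ht hsm.1 h1
    have hup : stmt15_h p t s ≤ (c + s)^2 := stmt15_h_upper ht.le hsm.1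
    have hsl : Real.sqrt (stmt15_h p t s) ≤ c + s := by
      have h3 : c + s = Real.sqrt ((c+s)^2) := (Real.sqrt_sq (by linarith [hsm.1, hc0.le])).symm
      rw [h3]
      exact Real.sqrt_le_sqrt hup
    exact inv_anti₀ (Real.sqrt_pos.mpr hpos) hsl
  calc Real.log ((c+1)/c) = ∫ s in (0:ℝ)..1, (c + s)⁻¹ := hval.symm
    _ ≤ stmt15_Phi p t :=
      intervalIntegral.integral_mono_ae_restrict (by norm_num) hint (stmt15_f_int hp ht) hae

theorem stmt15_exists_t {p : ℝ} (l : ℝ) (hp : 2 < p) (hl : 0 < l) :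
    ∃ t : ℝ, 1 < t ∧ stmt15_Phi p t = l / 2 := by
  set I₀ : ℝ := ∫ s in (0:ℝ)..1, (Real.sqrt (1-s))⁻¹ with hI₀def
  have hI₀ : 0 ≤ I₀ :=
    intervalIntegral.integral_nonneg (by norm_num) (fun s _ => by positivity)
  set c₁ : ℝ := Real.exp (-(l/2) - 1) with hc₁def
  have hc₁ : 0 < c₁ := Real.exp_pos _
  set t₁ : ℝ := 1 + c₁^2 with ht₁def
  have ht₁ : 1 < t₁ := by nlinarith
  have hsq1 : Real.sqrt (t₁ - 1) = c₁ := by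
    rw [ht₁def, add_sub_cancel_left, Real.sqrt_sq hc₁.le]
  have hlow : l/2 < stmt15_Phi p t₁ := by
    have h1 := stmt15_Phi_ge hp.le ht₁
    rw [hsq1] at h1
    have h2 : Real.log ((c₁ + 1)/c₁) = Real.log (c₁ + 1) - Real.log c₁ :=
      Real.log_div (by positivity) (ne_of_gt hc₁)
    have h3 : Real.log c₁ = -(l/2) - 1 := Real.log_exp _
    have h4 : 0 ≤ Real.log (c₁ + 1) := Real.log_nonneg (by linarith)
    rw [h2, h3] at h1
    linarith
  set t₂ : ℝ := max (t₁ + 1) (1 + (2*(I₀+1)/l)^2) with ht₂def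
  have ht₁₂ : t₁ ≤ t₂ := le_trans (by linarith) (le_max_left _ _)
  have ht₂ : 1 < t₂ := lt_of_lt_of_le ht₁ ht₁₂
  have hupp : stmt15_Phi p t₂ < l/2 := by
    have h1 := stmt15_Phi_le hp.le ht₂
    have hd : 0 < 2*(I₀+1)/l := by positivity
    have h2 : 2*(I₀+1)/l ≤ Real.sqrt (t₂ - 1) := by
      have h3 : (2*(I₀+1)/l)^2 ≤ t₂ - 1 := by
        have := le_max_right (t₁ + 1) (1 + (2*(I₀+1)/l)^2)
        rw [← ht₂def] at this
        linarith
      calc 2*(I₀+1)/l = Real.sqrt ((2*(I₀+1)/l)^2) := (Real.sqrt_sq hd.le).symm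
        _ ≤ Real.sqrt (t₂ - 1) := Real.sqrt_le_sqrt h3
    have h4 : (Real.sqrt (t₂ - 1))⁻¹ ≤ (2*(I₀+1)/l)⁻¹ := inv_anti₀ hd h2
    have h5 : (Real.sqrt (t₂-1))⁻¹ * I₀ ≤ (2*(I₀+1)/l)⁻¹ * I₀ :=
      mul_le_mul_of_nonneg_right h4 hI₀
    have h6 : (2*(I₀+1)/l)⁻¹ * I₀ < l/2 := by
      rw [inv_div, div_mul_eq_mul_div, div_lt_iff₀ (by positivity)]
      nlinarith
    calc stmt15_Phi p t₂ ≤ (Real.sqrt (t₂-1))⁻¹ * I₀ := h1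
      _ ≤ _ := h5
      _ < l/2 := h6
  have hcont : ContinuousOn (stmt15_Phi p) (Set.Icc t₁ t₂) := fun t htm =>
    (stmt15_Phi_cont hp.le (lt_of_lt_of_le ht₁ htm.1)).continuousWithinAt
  have hivt := intermediate_value_Icc' ht₁₂ hcont
  have hmem : l/2 ∈ Set.Icc (stmt15_Phi p t₂) (stmt15_Phi p t₁) := ⟨hupp.le, hlow.le⟩
  obtain ⟨t, htmem, hte⟩ := hivt hmem
  exact ⟨t, lt_of_lt_of_le ht₁ htmem.1, hte⟩

theorem stmt15_main {p : ℝ} (hp : 2 < p) (ℓ : ℝ) (hℓ : 0 < ℓ) {T : ℝ} (hT : 1 < T)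
    (hPhi : stmt15_Phi p T = ℓ / 2) :
    ∃ v v' v'' : ℝ → ℝ,
      ContinuousOn v (Set.Icc 0 ℓ) ∧
      (∀ x ∈ Set.Ioo 0 ℓ, HasDerivAt v (v' x) x) ∧
      (∀ x ∈ Set.Ioo 0 ℓ, HasDerivAt v' (v'' x) x) ∧
      ContinuousOn v'' (Set.Ioo 0 ℓ) ∧
      (∀ x ∈ Set.Ioo 0 ℓ, 0 < v x) ∧
      v 0 = 0 ∧ v ℓ = 0 ∧
      (∀ x ∈ Set.Ioo 0 ℓ, -(v'' x) + v x = (v x) ^ (p - 1)) := by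
  have hp2 : (2:ℝ) ≤ p := hp.le
  have hl2 : 0 < ℓ/2 := by linarith
  -- the primitive G
  set G : ℝ → ℝ := fun x => ∫ s in (0:ℝ)..x, stmt15_f p T s with hGdef
  have hfint : IntervalIntegrable (stmt15_f p T) volume 0 1 := stmt15_f_int hp2 hT
  have hfint' : ∀ x y : ℝ, x ∈ Set.Icc (0:ℝ) 1 → y ∈ Set.Icc (0:ℝ) 1 →
      IntervalIntegrable (stmt15_f p T) volume x y := by
    intro x y hx hy
    apply hfint.mono_set
    rw [Set.uIcc_of_le (by norm_num : (0:ℝ) ≤ 1)]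
    exact Set.uIcc_subset_Icc hx hy
  have hG0 : G 0 = 0 := intervalIntegral.integral_same
  have hG1 : G 1 = ℓ/2 := hPhi
  have hfcont : ∀ u ∈ Set.Ioo (0:ℝ) 1, ContinuousAt (stmt15_f p T) u := by
    intro u hu
    have hpos : 0 < stmt15_h p T u := stmt15_h_pos hp2 hT hu.1.le hu.2
    apply ContinuousAt.inv₀
    · exact Real.continuous_sqrt.continuousAt.comp ((stmt15_h_cont p T (by linarith)).continuousAt)
    · exact ne_of_gt (Real.sqrt_pos.mpr hpos)
  have hGd : ∀ u ∈ Set.Ioo (0:ℝ) 1, HasDerivAt G (stmt15_f p T u) u := by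
    intro u hu
    apply intervalIntegral.integral_hasDerivAt_right
      (hfint' 0 u ⟨le_refl 0, zero_le_one⟩ ⟨hu.1.le, hu.2.le⟩)
    · exact ⟨Set.univ, Filter.univ_mem, (stmt15_f_meas p T (by linarith) _)⟩
    · exact hfcont u hu
  have hGcont : ContinuousOn G (Set.Icc 0 1) := by
    have := intervalIntegral.continuousOn_primitive_interval
      (μ := volume) (f := stmt15_f p T) (a := (0:ℝ)) (b := (1:ℝ)) ?_
    · rwa [Set.uIcc_of_le (by norm_num : (0:ℝ) ≤ 1)] at this
    · exact (intervalIntegrable_iff' (h := enorm_ne_top)).mp hfint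
  have hGmono : StrictMonoOn G (Set.Icc (0:ℝ) 1) := by
    intro x hx y hy hxy
    have hadd : G x + ∫ s in x..y, stmt15_f p T s = G y :=
      intervalIntegral.integral_add_adjacent_intervals
        (hfint' 0 x ⟨le_refl 0, zero_le_one⟩ hx) (hfint' x y hx hy)
    have hpos : 0 < ∫ s in x..y, stmt15_f p T s := by
      apply intervalIntegral.intervalIntegral_pos_of_pos_on (hfint' x y hx hy) _ hxy
      intro z hz
      have hz1 : 0 < stmt15_h p T z :=
        stmt15_h_pos hp2 hT (le_trans hx.1 hz.1.le) (lt_of_lt_of_le hz.2 hy.2)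
      rw [stmt15_f]
      positivity
    linarith
  -- G maps Icc 0 1 into Icc 0 (l/2) and is onto
  have hGmem : ∀ v ∈ Set.Icc (0:ℝ) 1, G v ∈ Set.Icc 0 (ℓ/2) := by
    intro v hv
    constructor
    · rw [← hG0]
      exact hGmono.monotoneOn ⟨le_refl 0, zero_le_one⟩ hv hv.1
    · rw [← hG1]
      exact hGmono.monotoneOn hv ⟨zero_le_one, le_refl 1⟩ hv.2
  have hGsurj : Set.Icc (0:ℝ) (ℓ/2) ⊆ G '' Set.Icc 0 1 := by
    have h1 := intermediate_value_Icc (by norm_num : (0:ℝ) ≤ 1) hGcont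
    rw [hG0, hG1] at h1
    exact h1
  let eFun : Set.Icc (0:ℝ) 1 → Set.Icc (0:ℝ) (ℓ/2) := fun v => ⟨G v, hGmem v v.2⟩
  have hbij : Function.Bijective eFun := by
    constructor
    · intro a b hab
      exact Subtype.ext (hGmono.injOn a.2 b.2 (congrArg Subtype.val hab))
    · intro y
      obtain ⟨v, hv, he⟩ := hGsurj y.2
      exact ⟨⟨v, hv⟩, Subtype.ext he⟩
  have hecont : Continuous eFun :=
    Continuous.subtype_mk (ContinuousOn.restrict hGcont) _
  let H := Continuous.homeoOfEquivCompactToT2 (f := Equiv.ofBijective eFun hbij) hecont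
  set U : ℝ → ℝ := fun x => (H.symm (Set.projIcc 0 (ℓ/2) hl2.le x) : ℝ) with hUdef
  have hUcont : Continuous U :=
    continuous_subtype_val.comp (H.symm.continuous.comp continuous_projIcc)
  have hUmem : ∀ x, U x ∈ Set.Icc (0:ℝ) 1 := fun x => (H.symm _).2
  have hHval : ∀ z : Set.Icc (0:ℝ) 1, (H z : ℝ) = G z := fun z => rfl
  have hGU : ∀ x ∈ Set.Icc 0 (ℓ/2), G (U x) = x := by
    intro x hx
    have h1 : Set.projIcc 0 (ℓ/2) hl2.le x = ⟨x, hx⟩ := Set.projIcc_of_mem _ hx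
    rw [hUdef]
    dsimp only
    rw [h1]
    have h2 := H.apply_symm_apply ⟨x, hx⟩
    calc G (H.symm ⟨x,hx⟩ : ℝ) = ((H (H.symm ⟨x,hx⟩)) : ℝ) := (hHval _).symm
      _ = x := by rw [h2]
  have hUG : ∀ v ∈ Set.Icc (0:ℝ) 1, U (G v) = v := by
    intro v hv
    have h1 : Set.projIcc 0 (ℓ/2) hl2.le (G v) = ⟨G v, hGmem v hv⟩ :=
      Set.projIcc_of_mem _ (hGmem v hv)
    rw [hUdef]
    dsimp only
    rw [h1]
    have h2 : (⟨G v, hGmem v hv⟩ : Set.Icc (0:ℝ) (ℓ/2)) = H ⟨v, hv⟩ := rfl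
    rw [h2, H.symm_apply_apply]
  have hU0 : U 0 = 0 := by
    have h1 := hUG 0 ⟨le_refl 0, zero_le_one⟩
    rwa [hG0] at h1
  have hUl2 : U (ℓ/2) = 1 := by
    have h1 := hUG 1 ⟨zero_le_one, le_refl 1⟩
    rwa [hG1] at h1
  have hUpos : ∀ x, 0 < x → x ≤ ℓ/2 → 0 < U x := by
    intro x hx1 hx2
    rcases (hUmem x).1.eq_or_lt with h | h
    · exfalso
      have h1 := hGU x ⟨hx1.le, hx2⟩
      rw [← h, hG0] at h1
      linarith
    · exact h
  have hUlt1 : ∀ x, 0 ≤ x → x < ℓ/2 → U x < 1 := by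
    intro x hx1 hx2
    rcases eq_or_lt_of_le (hUmem x).2 with h | h
    · exfalso
      have h1 := hGU x ⟨hx1, hx2.le⟩
      rw [h, hG1] at h1
      linarith
    · exact h
  have hUd : ∀ x ∈ Set.Ioo 0 (ℓ/2), HasDerivAt U (Real.sqrt (stmt15_h p T (U x))) x := by
    intro x hx
    have hmem : U x ∈ Set.Ioo (0:ℝ) 1 := ⟨hUpos x hx.1 hx.2.le, hUlt1 x hx.1.le hx.2⟩
    have hhpos := stmt15_h_pos hp2 hT hmem.1.le hmem.2
    have hfpos : 0 < stmt15_f p T (U x) := by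
      rw [stmt15_f]
      positivity
    have h1 : HasDerivAt U (stmt15_f p T (U x))⁻¹ x := by
      apply HasDerivAt.of_local_left_inverse hUcont.continuousAt (hGd (U x) hmem)
        (ne_of_gt hfpos)
      filter_upwards [Ioo_mem_nhds hx.1 hx.2] with y hy
      exact hGU y ⟨hy.1.le, hy.2.le⟩
    rwa [stmt15_f, inv_inv] at h1
  -- scaling constant
  have hTp2 : (0:ℝ) < T * p / 2 := by nlinarith
  set M : ℝ := (T * p / 2) ^ ((p - 2)⁻¹ : ℝ) with hMdef
  have hM : 0 < M := Real.rpow_pos_of_pos hTp2 _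
  have hMk : M ^ (p - 2 : ℝ) = T * p / 2 := by
    rw [hMdef, ← Real.rpow_mul hTp2.le, inv_mul_cancel₀ (by intro h0; linarith [sub_eq_zero.mp h0] : p - 2 ≠ 0), Real.rpow_one]
  set w : ℝ → ℝ := fun x => U (min x (ℓ - x)) with hwdef
  have hwcont : Continuous w :=
    hUcont.comp (continuous_id.min (continuous_const.sub continuous_id))
  have hmin_left : ∀ x : ℝ, x ≤ ℓ/2 → min x (ℓ - x) = x := fun x hx =>
    min_eq_left (by linarith)
  have hmin_right : ∀ x : ℝ, ℓ/2 ≤ x → min x (ℓ - x) = ℓ - x := fun x hx =>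
    min_eq_right (by linarith)
  have hwmem : ∀ x, w x ∈ Set.Icc (0:ℝ) 1 := fun x => hUmem _
  have hwmid : w (ℓ/2) = 1 := by
    rw [hwdef]
    dsimp only
    rw [hmin_left (ℓ/2) le_rfl, hUl2]
  set v : ℝ → ℝ := fun x => M * w x with hvdef
  set v' : ℝ → ℝ := fun x => M * (if x ≤ ℓ/2 then Real.sqrt (stmt15_h p T (w x))
    else -Real.sqrt (stmt15_h p T (w x))) with hv'def
  set v'' : ℝ → ℝ := fun x => M * (w x - (T * p / 2) * (w x) ^ (p - 1)) with hv''def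
  have hv''cont : Continuous v'' := by
    rw [hv''def]
    exact continuous_const.mul (hwcont.sub (continuous_const.mul
      ((Real.continuous_rpow_const (by linarith : (0:ℝ) ≤ p - 1)).comp hwcont)))
  have hsqcont : Continuous fun y => M * Real.sqrt (stmt15_h p T (w y)) :=
    continuous_const.mul (Real.continuous_sqrt.comp
      ((stmt15_h_cont p T (by linarith)).comp hwcont))
  have hsqmid : M * Real.sqrt (stmt15_h p T (w (ℓ/2))) = 0 := by
    rw [hwmid, stmt15_h_one, Real.sqrt_zero, mul_zero]
  have hv'mid : v' (ℓ/2) = 0 := by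
    rw [hv'def]
    dsimp only
    rw [if_pos le_rfl, hwmid, stmt15_h_one, Real.sqrt_zero, mul_zero]
  have hv'cont : ContinuousAt v' (ℓ/2) := by
    rw [ContinuousAt, hv'mid]
    have hub : ∀ y, v' y ≤ M * Real.sqrt (stmt15_h p T (w y)) := by
      intro y
      rw [hv'def]
      dsimp only
      split_ifs with hy
      · exact le_rfl
      · have h1 : 0 ≤ Real.sqrt (stmt15_h p T (w y)) := Real.sqrt_nonneg _
        nlinarith
    have hlb : ∀ y, -(M * Real.sqrt (stmt15_h p T (w y))) ≤ v' y := by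
      intro y
      rw [hv'def]
      dsimp only
      split_ifs with hy
      · have h1 : 0 ≤ Real.sqrt (stmt15_h p T (w y)) := Real.sqrt_nonneg _
        nlinarith
      · rw [mul_neg]
    have htb : Tendsto (fun y => M * Real.sqrt (stmt15_h p T (w y))) (𝓝 (ℓ/2)) (𝓝 0) := by
      have := hsqcont.tendsto (ℓ/2)
      rwa [hsqmid] at this
    have htb' : Tendsto (fun y => -(M * Real.sqrt (stmt15_h p T (w y)))) (𝓝 (ℓ/2)) (𝓝 0) := by
      have := htb.neg
      rwa [neg_zero] at this
    exact tendsto_of_tendsto_of_tendsto_of_le_of_le htb' htb hlb hub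
  -- derivative of h
  have hcore : ∀ u : ℝ, HasDerivAt (stmt15_h p T) (2*u - T*(p * u^(p-1))) u := by
    intro u
    have h1 : HasDerivAt (fun s : ℝ => s ^ p) (p * u^(p-1)) u :=
      Real.hasDerivAt_rpow_const (Or.inr (by linarith))
    have h2 : HasDerivAt (fun s : ℝ => s ^ (2:ℕ)) (2*u) u := by
      simpa using hasDerivAt_pow 2 u
    have h3 := ((h1.const_sub 1).const_mul T).sub (h2.const_sub 1)
    have h4 : T * -(p * u ^ (p-1)) - -(2*u) = 2*u - T*(p * u^(p-1)) := by ring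
    rw [h4] at h3
    exact h3
  -- derivative of v away from the midpoint
  have hvd : ∀ x ∈ Set.Ioo 0 ℓ, x ≠ ℓ/2 → HasDerivAt v (v' x) x := by
    intro x hx hne
    rcases lt_or_gt_of_ne hne with hlt | hgt
    · have hxm : x ∈ Set.Ioo 0 (ℓ/2) := ⟨hx.1, hlt⟩
      have hDer : HasDerivAt (fun y => M * U y) (M * Real.sqrt (stmt15_h p T (U x))) x :=
        (hUd x hxm).const_mul M
      have hev : v =ᶠ[𝓝 x] fun y => M * U y := by
        filter_upwards [Iio_mem_nhds hlt] with y hy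
        rw [hvdef, hwdef]
        dsimp only
        rw [hmin_left y (le_of_lt hy)]
      have hfin := hDer.congr_of_eventuallyEq hev
      have hveq : v' x = M * Real.sqrt (stmt15_h p T (U x)) := by
        rw [hv'def, hwdef]
        dsimp only
        rw [if_pos hlt.le, hmin_left x hlt.le]
      rwa [hveq]
    · have hxm : ℓ - x ∈ Set.Ioo 0 (ℓ/2) := ⟨by linarith [hx.2], by linarith⟩
      have hInner : HasDerivAt (fun y : ℝ => ℓ - y) (-1) x := by
        simpa using (hasDerivAt_id x).const_sub ℓ
      have hComp := ((hUd (ℓ-x) hxm).comp x hInner).const_mul M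
      have hev : v =ᶠ[𝓝 x] fun y => M * U (ℓ - y) := by
        filter_upwards [Ioi_mem_nhds hgt] with y hy
        rw [hvdef, hwdef]
        dsimp only
        rw [hmin_right y (le_of_lt hy)]
      have hfin := hComp.congr_of_eventuallyEq hev
      have hveq : v' x = M * (Real.sqrt (stmt15_h p T (U (ℓ-x))) * (-1)) := by
        rw [hv'def, hwdef]
        dsimp only
        rw [if_neg (not_le.mpr hgt), hmin_right x hgt.le]
        ring
      rwa [hveq]
  -- derivative of v at the midpoint
  have hvmid : HasDerivAt v (v' (ℓ/2)) (ℓ/2) := by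
    apply stmt15_glue (a := 0) (b := ℓ) ⟨by linarith, by linarith⟩ hvd _ hv'cont
    exact (continuous_const.mul hwcont).continuousAt
  have hvd' : ∀ x ∈ Set.Ioo 0 ℓ, HasDerivAt v (v' x) x := by
    intro x hx
    by_cases hne : x = ℓ/2
    · rw [hne]; exact hvmid
    · exact hvd x hx hne
  -- derivative of v' away from midpoint
  have hv'd : ∀ x ∈ Set.Ioo 0 ℓ, x ≠ ℓ/2 → HasDerivAt v' (v'' x) x := by
    intro x hx hne
    rcases lt_or_gt_of_ne hne with hlt | hgt
    · have hxm : x ∈ Set.Ioo 0 (ℓ/2) := ⟨hx.1, hlt⟩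
      have hum : U x ∈ Set.Ioo (0:ℝ) 1 := ⟨hUpos x hxm.1 hxm.2.le, hUlt1 x hxm.1.le hxm.2⟩
      have hval : 0 < stmt15_h p T (U x) := stmt15_h_pos hp2 hT hum.1.le hum.2
      have hs0 : Real.sqrt (stmt15_h p T (U x)) ≠ 0 := ne_of_gt (Real.sqrt_pos.mpr hval)
      have hinner : HasDerivAt (fun y => stmt15_h p T (U y))
          ((2*(U x) - T*(p * (U x)^(p-1))) * Real.sqrt (stmt15_h p T (U x))) x :=
        (hcore (U x)).comp x (hUd x hxm)
      have houter := (Real.hasDerivAt_sqrt (ne_of_gt hval)).comp x hinner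
      have hDer := houter.const_mul M
      have hev : v' =ᶠ[𝓝 x] fun y => M * Real.sqrt (stmt15_h p T (U y)) := by
        filter_upwards [Iio_mem_nhds hlt] with y hy
        rw [hv'def, hwdef]
        dsimp only
        rw [if_pos (le_of_lt hy), hmin_left y (le_of_lt hy)]
      have hfin := hDer.congr_of_eventuallyEq hev
      have hveq : v'' x = M * (1 / (2 * Real.sqrt (stmt15_h p T (U x))) *
          ((2*(U x) - T*(p * (U x)^(p-1))) * Real.sqrt (stmt15_h p T (U x)))) := by
        rw [hv''def, hwdef]
        dsimp only
        rw [hmin_left x hlt.le]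
        field_simp
      rwa [hveq]
    · have hxm : ℓ - x ∈ Set.Ioo 0 (ℓ/2) := ⟨by linarith [hx.2], by linarith⟩
      have hum : U (ℓ-x) ∈ Set.Ioo (0:ℝ) 1 :=
        ⟨hUpos _ hxm.1 hxm.2.le, hUlt1 _ hxm.1.le hxm.2⟩
      have hval : 0 < stmt15_h p T (U (ℓ-x)) := stmt15_h_pos hp2 hT hum.1.le hum.2
      have hs0 : Real.sqrt (stmt15_h p T (U (ℓ-x))) ≠ 0 := ne_of_gt (Real.sqrt_pos.mpr hval)
      have hInner : HasDerivAt (fun y : ℝ => ℓ - y) (-1) x := by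
        simpa using (hasDerivAt_id x).const_sub ℓ
      have hUcomp : HasDerivAt (fun y => U (ℓ - y))
          (Real.sqrt (stmt15_h p T (U (ℓ-x))) * (-1)) x :=
        (hUd (ℓ-x) hxm).comp x hInner
      have hinner : HasDerivAt (fun y => stmt15_h p T (U (ℓ - y)))
          ((2*(U (ℓ-x)) - T*(p * (U (ℓ-x))^(p-1))) *
            (Real.sqrt (stmt15_h p T (U (ℓ-x))) * (-1))) x :=
        by have := (hcore (U (ℓ-x))).comp x hUcomp; exact this
      have houter := (Real.hasDerivAt_sqrt (ne_of_gt hval)).comp x hinner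
      have hDer := houter.neg.const_mul M
      have hev : v' =ᶠ[𝓝 x] fun y => M * (-(Real.sqrt (stmt15_h p T (U (ℓ - y))))) := by
        filter_upwards [Ioi_mem_nhds hgt] with y hy
        rw [hv'def, hwdef]
        dsimp only
        rw [if_neg (not_le.mpr hy), hmin_right y (le_of_lt hy)]
      have hfin := hDer.congr_of_eventuallyEq hev
      have hveq : v'' x = M * -(1 / (2 * Real.sqrt (stmt15_h p T (U (ℓ-x)))) *
          ((2*(U (ℓ-x)) - T*(p * (U (ℓ-x))^(p-1))) *
            (Real.sqrt (stmt15_h p T (U (ℓ-x))) * (-1)))) := by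
        rw [hv''def, hwdef]
        dsimp only
        rw [hmin_right x hgt.le]
        field_simp
      rwa [hveq]
  have hv'mid' : HasDerivAt v' (v'' (ℓ/2)) (ℓ/2) := by
    apply stmt15_glue (a := 0) (b := ℓ) ⟨by linarith, by linarith⟩ hv'd hv'cont
      hv''cont.continuousAt
  have hv'd' : ∀ x ∈ Set.Ioo 0 ℓ, HasDerivAt v' (v'' x) x := by
    intro x hx
    by_cases hne : x = ℓ/2
    · rw [hne]; exact hv'mid'
    · exact hv'd x hx hne
  -- assemble
  refine ⟨v, v', v'', ?_, hvd', hv'd', hv''cont.continuousOn, ?_, ?_, ?_, ?_⟩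
  · exact (continuous_const.mul hwcont).continuousOn
  · intro x hx
    rw [hvdef, hwdef]
    dsimp only
    have hm1 : 0 < min x (ℓ - x) := lt_min hx.1 (by linarith [hx.2])
    have hm2 : min x (ℓ - x) ≤ ℓ/2 := by
      have := min_le_left x (ℓ-x)
      have := min_le_right x (ℓ-x)
      linarith
    exact mul_pos hM (hUpos _ hm1 hm2)
  · show M * U (min 0 (ℓ - 0)) = 0
    rw [min_eq_left (by linarith : (0:ℝ) ≤ ℓ - 0), hU0, mul_zero]
  · show M * U (min ℓ (ℓ - ℓ)) = 0
    rw [min_eq_right (by linarith : ℓ - ℓ ≤ ℓ), sub_self, hU0, mul_zero]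
  · intro x hx
    have hw0 : 0 ≤ w x := (hwmem x).1
    have hkey : M * (T*p/2) = M ^ (p-1:ℝ) := by
      calc M * (T*p/2) = M ^ (1:ℝ) * M ^ (p-2:ℝ) := by rw [Real.rpow_one, hMk]
        _ = M ^ (1 + (p-2) : ℝ) := (Real.rpow_add hM _ _).symm
        _ = M ^ (p-1:ℝ) := by congr 1; ring
    show -(M * (w x - T * p / 2 * w x ^ (p - 1))) + M * w x = (M * w x) ^ (p - 1)
    have hexp : -(M * (w x - T * p / 2 * w x ^ (p - 1))) + M * w x
        = (M * (T*p/2)) * w x ^ (p-1) := by ring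
    rw [hexp, hkey, ← Real.mul_rpow hM.le hw0]

theorem stmt15 (p : ℝ) (hp : 2 < p) (ℓ : ℝ) (hℓ : 0 < ℓ) :
    ∃ v v' v'' : ℝ → ℝ,
      ContinuousOn v (Set.Icc 0 ℓ) ∧
      (∀ x ∈ Set.Ioo 0 ℓ, HasDerivAt v (v' x) x) ∧
      (∀ x ∈ Set.Ioo 0 ℓ, HasDerivAt v' (v'' x) x) ∧
      ContinuousOn v'' (Set.Ioo 0 ℓ) ∧
      (∀ x ∈ Set.Ioo 0 ℓ, 0 < v x) ∧
      v 0 = 0 ∧ v ℓ = 0 ∧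
      (∀ x ∈ Set.Ioo 0 ℓ, -(v'' x) + v x = (v x) ^ (p - 1)) := by
  obtain ⟨T, hT, hPhi⟩ := stmt15_exists_t ℓ hp hℓ
  exact stmt15_main hp ℓ hℓ hT hPhi
end

section
/- Let p > 2 be a real number and let v : ℝ → ℝ be a twice continuously differentiable nonnegative function satisfying -v''(x) + v(x) = |v(x)|^(p-2)·v(x) for all x ∈ ℝ, with v and v' square-integrable on ℝ. Then v(x) ≤ (p/2)^(1/(p-2)) for all x ∈ ℝ; that is, the maximum of v does not exceed the maximum of the soliton v̄. -/
open Real MeasureTheory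

theorem stmt16 (p : ℝ) (hp : 2 < p) (v : ℝ → ℝ)
    (hreg : ContDiff ℝ 2 v)
    (hnonneg : ∀ x, 0 ≤ v x)
    (hode : ∀ x, -(deriv (deriv v) x) + v x = |v x| ^ (p - 2) * v x)
    (hv2 : Integrable (fun x => (v x) ^ 2))
    (hv'2 : Integrable (fun x => (deriv v x) ^ 2)) :
    ∀ x, v x ≤ (p / 2) ^ (1 / (p - 2)) := by
  have hppos : (0:ℝ) < p := by linarith
  have hp2pos : (0:ℝ) < p - 2 := by linarith
  have hdv : Differentiable ℝ v := hreg.differentiable (by norm_num)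
  have hdv' : Differentiable ℝ (deriv v) := by
    have h2 : ContDiff ℝ ((1:ℕ) + 1) v := by exact_mod_cast hreg
    exact ((contDiff_succ_iff_deriv.mp h2).2.2).differentiable (by norm_num)
  set E : ℝ → ℝ := fun t => deriv v t ^ 2 - v t ^ 2 + 2 / p * v t ^ p with hEdef
  -- E has zero derivative everywhere
  have key : ∀ x, HasDerivAt E 0 x := by
    intro x
    have h1 : HasDerivAt v (deriv v x) x := (hdv x).hasDerivAt
    have h2 : HasDerivAt (deriv v) (deriv (deriv v) x) x := (hdv' x).hasDerivAt
    have hA : HasDerivAt (fun t => deriv v t ^ 2) (2 * deriv v x * deriv (deriv v) x) x := by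
      simpa using h2.fun_pow 2
    have hB : HasDerivAt (fun t => v t ^ 2) (2 * v x * deriv v x) x := by
      simpa using h1.fun_pow 2
    have hC : HasDerivAt (fun t => v t ^ p) (deriv v x * p * v x ^ (p - 1)) x :=
      h1.rpow_const (Or.inr (by linarith))
    have hD : HasDerivAt E (2 * deriv v x * deriv (deriv v) x - 2 * v x * deriv v x
        + 2 / p * (deriv v x * p * v x ^ (p - 1))) x := (hA.sub hB).add (hC.const_mul (2 / p))
    have hvv : v x ^ (p - 2) * v x = v x ^ (p - 1) := by
      rcases eq_or_lt_of_le (hnonneg x) with h0 | h0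
      · rw [← h0, Real.zero_rpow (by linarith), Real.zero_rpow (by linarith), mul_zero]
      · rw [show p - 1 = p - 2 + 1 by ring, Real.rpow_add_one (ne_of_gt h0)]
    have hode' : deriv (deriv v) x = v x - v x ^ (p - 1) := by
      have h := hode x
      rw [abs_of_nonneg (hnonneg x), hvv] at h
      linarith
    rw [hode'] at hD
    have hval : 2 * deriv v x * (v x - v x ^ (p - 1)) - 2 * v x * deriv v x
        + 2 / p * (deriv v x * p * v x ^ (p - 1)) = 0 := by
      field_simp
      ring
    rwa [hval] at hD
  have hconst : ∀ a b, E a = E b :=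
    is_const_of_deriv_eq_zero (fun x => (key x).differentiableAt) (fun x => (key x).deriv)
  -- points where v, v' are small
  have hsmall : ∀ ε : ℝ, 0 < ε → ∃ y, v y ^ 2 + deriv v y ^ 2 < ε := by
    intro ε hε
    by_contra h
    push_neg at h
    have hint : Integrable (fun y => v y ^ 2 + deriv v y ^ 2) := hv2.add hv'2
    have hc : Integrable (fun _ : ℝ => ε) := by
      apply hint.mono' aestronglyMeasurable_const
      filter_upwards with y
      rw [Real.norm_eq_abs, abs_of_pos hε]
      exact h y
    rw [integrable_const_iff] at hc
    rcases hc with h1 | h2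
    · exact hε.ne' h1
    · simp [isFiniteMeasure_iff, Real.volume_univ] at h2
  -- E is identically zero
  have hzero : ∀ x, E x = 0 := by
    intro x
    by_contra hne
    have hpos : 0 < |E x| := abs_pos.mpr hne
    obtain ⟨y, hy⟩ := hsmall (min (|E x| / 4) 1) (by positivity)
    have hy1 : v y ^ 2 + deriv v y ^ 2 < 1 := lt_of_lt_of_le hy (min_le_right _ _)
    have hy2 : v y ^ 2 + deriv v y ^ 2 < |E x| / 4 := lt_of_lt_of_le hy (min_le_left _ _)
    have hvy1 : v y ≤ 1 := by nlinarith [sq_nonneg (deriv v y), hnonneg y, sq_nonneg (v y - 1)]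
    have hvp0 : 0 ≤ v y ^ p := Real.rpow_nonneg (hnonneg y) p
    have hvyp : v y ^ p ≤ v y ^ 2 := by
      rcases eq_or_lt_of_le (hnonneg y) with h0 | h0
      · rw [← h0, Real.zero_rpow (by linarith)]; positivity
      · calc v y ^ p ≤ v y ^ (2:ℝ) :=
              Real.rpow_le_rpow_of_exponent_ge h0 hvy1 (by linarith)
          _ = v y ^ 2 := Real.rpow_two _
    have h2p : 2 / p ≤ 1 := by rw [div_le_one hppos]; linarith
    have hq : 2 / p * v y ^ p ≤ v y ^ p := by nlinarith
    have hq0 : 0 ≤ 2 / p * v y ^ p := by positivity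
    have hEy : E x = E y := hconst x y
    have hEyval : E y = deriv v y ^ 2 - v y ^ 2 + 2 / p * v y ^ p := rfl
    have hb : |E x| ≤ 2 * (v y ^ 2 + deriv v y ^ 2) := by
      rw [hEy, hEyval, abs_le]
      constructor <;> nlinarith [sq_nonneg (v y), sq_nonneg (deriv v y)]
    linarith
  -- conclude
  intro x₀
  rcases eq_or_lt_of_le (hnonneg x₀) with h0 | h0
  · rw [← h0]; positivity
  · have hE0 : deriv v x₀ ^ 2 - v x₀ ^ 2 + 2 / p * v x₀ ^ p = 0 := hzero x₀
    have hsplit : v x₀ ^ p = v x₀ ^ 2 * v x₀ ^ (p - 2) := by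
      rw [← Real.rpow_two, ← Real.rpow_add h0]
      ring_nf
    rw [hsplit] at hE0
    have hE2 : 2 * (v x₀ ^ 2 * v x₀ ^ (p - 2)) = p * (v x₀ ^ 2 - deriv v x₀ ^ 2) := by
      have hp0 : p ≠ 0 := ne_of_gt hppos
      field_simp at hE0
      nlinarith [hE0]
    have hkey : v x₀ ^ (p - 2) ≤ p / 2 := by
      nlinarith [pow_pos h0 2, sq_nonneg (deriv v x₀)]
    calc v x₀ = (v x₀ ^ (p - 2)) ^ ((p - 2)⁻¹) :=
          (Real.rpow_rpow_inv (hnonneg x₀) (ne_of_gt hp2pos)).symm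
      _ ≤ (p / 2) ^ ((p - 2)⁻¹) :=
          Real.rpow_le_rpow (Real.rpow_nonneg (hnonneg x₀) _) hkey (by positivity)
      _ = (p / 2) ^ (1 / (p - 2)) := by rw [one_div]
end

section
/- Let p > 2 be a real number. Let v be a twice continuously differentiable solution of -v'' + v = |v|^(p-2)·v on an interval containing 0 with v(0) = 0 and v'(0) ≠ 0, and let w : ℝ → ℝ be a twice continuously differentiable nonnegative solution of the same equation on ℝ, not identically zero, with w and w' square-integrable on ℝ. If x and y are points in the respective domains with v(x) = w(y) > 0, then |v'(x)| > |w'(y)|. -/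
open Real MeasureTheory

-- key: derivative of t ↦ |f t|^p
lemma abs_rpow_hasDeriv (p : ℝ) (hp : 2 < p) (f : ℝ → ℝ) (f'x : ℝ) (x : ℝ)
    (h1 : HasDerivAt f f'x x) :
    HasDerivAt (fun t => |f t| ^ p) (p * |f x| ^ (p - 2) * (f x * f'x)) x := by
  have key : ∀ t : ℝ, ((t : ℝ) ^ 2 : ℝ) ^ (p / 2) = |t| ^ p := by
    intro t
    rw [← sq_abs, ← Real.rpow_natCast |t| 2, ← Real.rpow_mul (abs_nonneg t)]
    congr 1; push_cast; ring
  have key2 : ((f x : ℝ) ^ 2 : ℝ) ^ (p / 2 - 1) = |f x| ^ (p - 2) := by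
    rw [← sq_abs, ← Real.rpow_natCast |f x| 2, ← Real.rpow_mul (abs_nonneg (f x))]
    congr 1; push_cast; ring
  have hg : HasDerivAt (fun t => (f t) ^ 2) (2 * f x * f'x) x := by
    simpa using h1.fun_pow 2
  have h := hg.rpow_const (p := p / 2) (Or.inr (by linarith))
  have heq : (fun t => ((f t) ^ 2 : ℝ) ^ (p / 2)) = fun t => |f t| ^ p := by
    funext t; exact key (f t)
  rw [heq] at h
  convert h using 1
  rw [key2]; ring

lemma energy_deriv (p : ℝ) (hp : 2 < p) (f f' f'' : ℝ → ℝ) (x : ℝ)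
    (h1 : HasDerivAt f (f' x) x) (h2 : HasDerivAt f' (f'' x) x)
    (hode : -(f'' x) + f x = |f x| ^ (p - 2) * f x) :
    HasDerivAt (fun t => (f' t) ^ 2 - (f t) ^ 2 + (2 / p) * |f t| ^ p) 0 x := by
  have habs := abs_rpow_hasDeriv p hp f (f' x) x h1
  have hE := ((h2.fun_pow 2).sub (h1.fun_pow 2)).add (habs.const_mul (2 / p))
  refine hE.congr_deriv ?_
  have hp0 : p ≠ 0 := by positivity
  field_simp
  linear_combination (-2 * f' x) * hode

theorem stmt17 (p : ℝ) (hp : 2 < p) (I : Set ℝ) (hIopen : IsOpen I)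
    (hIconn : I.OrdConnected) (h0I : (0 : ℝ) ∈ I)
    (v v' v'' : ℝ → ℝ)
    (hv : ∀ x ∈ I, HasDerivAt v (v' x) x)
    (hv' : ∀ x ∈ I, HasDerivAt v' (v'' x) x)
    (hv''cont : ContinuousOn v'' I)
    (hode : ∀ x ∈ I, -(v'' x) + v x = |v x| ^ (p - 2) * v x)
    (hv0 : v 0 = 0) (hv'0 : v' 0 ≠ 0)
    (w : ℝ → ℝ)
    (hwreg : ContDiff ℝ 2 w)
    (hwnonneg : ∀ x, 0 ≤ w x)
    (hwne : w ≠ 0)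
    (hwode : ∀ x, -(deriv (deriv w) x) + w x = |w x| ^ (p - 2) * w x)
    (hw2 : Integrable (fun x => (w x) ^ 2))
    (hw'2 : Integrable (fun x => (deriv w x) ^ 2))
    (x y : ℝ) (hx : x ∈ I) (hxy : v x = w y) (hpos : 0 < v x) :
    |deriv w y| < |v' x| := by
  have hp0 : (0:ℝ) < p := by linarith
  -- energy of v
  set Ev : ℝ → ℝ := fun t => (v' t) ^ 2 - (v t) ^ 2 + (2 / p) * |v t| ^ p with hEvdef
  have hEv : ∀ t ∈ I, HasDerivAt Ev 0 t := fun t ht =>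
    energy_deriv p hp v v' v'' t (hv t ht) (hv' t ht) (hode t ht)
  have hconv : Convex ℝ I := convex_iff_ordConnected.mpr hIconn
  have hdiff : DifferentiableOn ℝ Ev I := fun t ht =>
    (hEv t ht).differentiableAt.differentiableWithinAt
  have hfd : ∀ t ∈ I, fderivWithin ℝ Ev I t = 0 := by
    intro t ht
    have h0 : HasFDerivAt Ev (0 : ℝ →L[ℝ] ℝ) t := by
      have := (hEv t ht).hasFDerivAt
      rw [ContinuousLinearMap.toSpanSingleton_zero] at this; exact this
    exact h0.hasFDerivWithinAt.fderivWithin (hIopen.uniqueDiffWithinAt ht)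
  have hEvconst : Ev x = Ev 0 :=
    hconv.is_const_of_fderivWithin_eq_zero hdiff hfd hx h0I
  have hEv0 : Ev 0 = (v' 0) ^ 2 := by
    simp [hEvdef, hv0, Real.zero_rpow (ne_of_gt hp0)]
  -- energy of w
  have hwdiff : Differentiable ℝ w := hwreg.differentiable (by norm_num)
  have hw1 : ∀ t, HasDerivAt w (deriv w t) t := fun t => (hwdiff t).hasDerivAt
  have hwd1 : ContDiff ℝ 1 (deriv w) := by
    have h2 : ContDiff ℝ ((1 : ℕ) + 1) w := by exact_mod_cast hwreg
    exact (contDiff_succ_iff_deriv.mp h2).2.2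
  have hw1' : ∀ t, HasDerivAt (deriv w) (deriv (deriv w) t) t := fun t =>
    ((hwd1.differentiable one_ne_zero) t).hasDerivAt
  set Ew : ℝ → ℝ := fun t => (deriv w t) ^ 2 - (w t) ^ 2 + (2 / p) * |w t| ^ p with hEwdef
  have hEw : ∀ t, HasDerivAt Ew 0 t := fun t =>
    energy_deriv p hp w (deriv w) (deriv (deriv w)) t (hw1 t) (hw1' t) (hwode t)
  have hEwconst : ∀ s t : ℝ, Ew s = Ew t :=
    fun s t => is_const_of_deriv_eq_zero (fun u => (hEw u).differentiableAt)
      (fun u => (hEw u).deriv) s t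
  -- the energy of w is zero
  have hsmall : ∀ ε > (0:ℝ), ∃ t, w t ^ 2 + (deriv w t) ^ 2 < ε := by
    by_contra h
    push_neg at h
    obtain ⟨ε, hε, h⟩ := h
    have hint := hw2.add hw'2
    have hconst : Integrable (fun _ : ℝ => ε) := by
      refine hint.mono' aestronglyMeasurable_const (ae_of_all _ fun t => ?_)
      rw [Real.norm_eq_abs, abs_of_pos hε]; exact h t
    rw [integrable_const_iff] at hconst
    rcases hconst with h' | h'
    · exact absurd h' (ne_of_gt hε)
    · have h'' := h'.measure_univ_lt_top
      simp [Real.volume_univ] at h''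
  have hseq : ∀ n : ℕ, ∃ t, w t ^ 2 + (deriv w t) ^ 2 < 1 / (n + 1) := fun n =>
    hsmall _ (by positivity)
  choose u hu using hseq
  have htend : Filter.Tendsto (fun n => w (u n) ^ 2 + (deriv w (u n)) ^ 2)
      Filter.atTop (nhds 0) :=
    squeeze_zero (fun n => by positivity) (fun n => (hu n).le)
      tendsto_one_div_add_atTop_nhds_zero_nat
  have hwsq : Filter.Tendsto (fun n => w (u n) ^ 2) Filter.atTop (nhds 0) :=
    squeeze_zero (fun n => by positivity) (fun n => by nlinarith [sq_nonneg (deriv w (u n))]) htend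
  have hw'sq : Filter.Tendsto (fun n => (deriv w (u n)) ^ 2) Filter.atTop (nhds 0) :=
    squeeze_zero (fun n => by positivity) (fun n => by nlinarith [sq_nonneg (w (u n))]) htend
  have habs : Filter.Tendsto (fun n => |w (u n)|) Filter.atTop (nhds 0) := by
    have := (Real.continuous_sqrt.tendsto 0).comp hwsq
    simp only [Real.sqrt_zero] at this
    convert this using 2 with n
    simp [Function.comp, Real.sqrt_sq_eq_abs]
  have hwpow : Filter.Tendsto (fun n => |w (u n)| ^ p) Filter.atTop (nhds 0) := by
    have hc : ContinuousAt (fun s : ℝ => s ^ p) 0 :=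
      Real.continuousAt_rpow_const 0 p (Or.inr (le_of_lt hp0))
    have := (hc.tendsto.comp habs)
    simpa [Function.comp_def, Real.zero_rpow (ne_of_gt hp0)] using this
  have hEwlim : Filter.Tendsto (fun n => Ew (u n)) Filter.atTop (nhds 0) := by
    have := (hw'sq.sub hwsq).add (hwpow.const_mul (2 / p))
    simpa [hEwdef] using this
  have hEwy : Ew y = 0 := by
    have hcc : Filter.Tendsto (fun _ : ℕ => Ew y) Filter.atTop (nhds (Ew y)) :=
      tendsto_const_nhds
    have heq : (fun n : ℕ => Ew (u n)) = fun _ : ℕ => Ew y := by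
      funext n; exact hEwconst (u n) y
    rw [heq] at hEwlim
    exact tendsto_nhds_unique hcc hEwlim
  -- conclude
  have h1 : (v' x) ^ 2 - (v x) ^ 2 + (2 / p) * |v x| ^ p = (v' 0) ^ 2 := by
    have := hEvconst; rw [hEv0] at this; exact this
  have h2 : (deriv w y) ^ 2 - (w y) ^ 2 + (2 / p) * |w y| ^ p = 0 := hEwy
  rw [hxy] at h1
  have hkey : (v' x) ^ 2 = (v' 0) ^ 2 + (deriv w y) ^ 2 := by linarith
  have hpos0 : 0 < (v' 0) ^ 2 := sq_pos_of_ne_zero hv'0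
  nlinarith [sq_abs (v' x), sq_abs (deriv w y), abs_nonneg (deriv w y), abs_nonneg (v' x)]
end

section
/- Let p > 2 be a real number, let N ≥ 1 be a natural number, and define v̄ : ℝ → ℝ by v̄(s) = (p/2)^(1/(p-2)) · (cosh((p-2)·s/2))^(-2/(p-2)). Then the Gagliardo–Nirenberg quotient of the configuration consisting of N copies of the half-soliton satisfies (N·∫_0^∞ (v̄'² + v̄²) ds) / (N·∫_0^∞ v̄^p ds)^(2/p) = (N/2)^(1 - 2/p) · (∫_ℝ v̄^p ds)^((p-2)/p). In particular, for N ≥ 3 this value is strictly greater than (∫_ℝ v̄^p ds)^((p-2)/p) = I_{p,0}. -/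
set_option maxHeartbeats 1000000
open Real MeasureTheory

noncomputable def vbar (p : ℝ) (s : ℝ) : ℝ :=
  (p / 2) ^ (1 / (p - 2)) * (Real.cosh ((p - 2) * s / 2)) ^ (-2 / (p - 2))

lemma vbar_eq (p s : ℝ) :
    vbar p s = (p/2) ^ (1/(p-2)) * Real.cosh ((p-2)/2*s) ^ (-2/(p-2)) := by
  unfold vbar; rw [show (p-2)*s/2 = (p-2)/2*s by ring]

lemma sq_vbar {p : ℝ} (hp : 2 < p) (s : ℝ) :
    vbar p s ^ 2 = ((p/2) ^ (1/(p-2)))^2 *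
      (Real.cosh ((p-2)/2*s) ^ (2*(-2/(p-2))-2) * Real.cosh ((p-2)/2*s) ^ 2) := by
  have hch := Real.cosh_pos (x := (p-2)/2*s)
  have hpc : p - 2 ≠ 0 := by intro h; linarith [h]
  rw [vbar_eq, mul_pow, ← Real.rpow_natCast (Real.cosh ((p-2)/2*s) ^ (-2/(p-2))) 2,
    ← Real.rpow_mul hch.le, ← Real.rpow_natCast (Real.cosh ((p-2)/2*s)) 2,
    ← Real.rpow_add hch]
  congr 1
  push_cast
  ring

lemma rpow_vbar {p : ℝ} (hp : 2 < p) (s : ℝ) :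
    vbar p s ^ p = (((p/2) ^ (1/(p-2)))^2 * (p/2)) *
      Real.cosh ((p-2)/2*s) ^ (2*(-2/(p-2))-2) := by
  have hch := Real.cosh_pos (x := (p-2)/2*s)
  have hpc : p - 2 ≠ 0 := by intro h; linarith [h]
  have hp2 : (0:ℝ) < p/2 := by linarith
  have hC : (0:ℝ) < (p/2) ^ (1/(p-2)) := Real.rpow_pos_of_pos hp2 _
  rw [vbar_eq, Real.mul_rpow hC.le (Real.rpow_nonneg hch.le _),
    ← Real.rpow_natCast ((p/2) ^ (1/(p-2))) 2, ← Real.rpow_mul hp2.le,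
    ← Real.rpow_mul hp2.le, ← Real.rpow_mul hch.le,
    ← Real.rpow_add_one hp2.ne']
  congr 1
  · congr 1; push_cast; field_simp; ring
  · field_simp; ring

lemma hasDerivAt_vbar {p : ℝ} (hp : 2 < p) (s : ℝ) :
    HasDerivAt (vbar p)
      (-((p/2) ^ (1/(p-2))) * Real.sinh ((p-2)/2*s) *
        Real.cosh ((p-2)/2*s) ^ (-2/(p-2) - 1)) s := by
  have hpc : p - 2 ≠ 0 := by intro h; linarith [h]
  have h1 : HasDerivAt (fun s : ℝ => (p-2)/2*s) ((p-2)/2) s := by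
    simpa using (hasDerivAt_id s).const_mul ((p-2)/2)
  have h2 := (Real.hasDerivAt_cosh ((p-2)/2*s)).comp s h1
  have h3 := h2.rpow_const (p := -2/(p-2)) (Or.inl (Real.cosh_pos (x := (p-2)/2*s)).ne')
  have h4 := h3.const_mul ((p/2) ^ (1/(p-2)))
  have hfun : vbar p = fun s => (p/2) ^ (1/(p-2)) * Real.cosh ((p-2)/2*s) ^ (-2/(p-2)) :=
    funext (vbar_eq p)
  rw [hfun]
  refine h4.congr_deriv (Eq.symm ?_)
  simp only [Function.comp_apply]
  field_simp

lemma sq_deriv_vbar {p : ℝ} (hp : 2 < p) (s : ℝ) :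
    (deriv (vbar p) s)^2 = ((p/2) ^ (1/(p-2)))^2 * Real.sinh ((p-2)/2*s) ^ 2 *
      Real.cosh ((p-2)/2*s) ^ (2*(-2/(p-2))-2) := by
  have hch := Real.cosh_pos (x := (p-2)/2*s)
  rw [(hasDerivAt_vbar hp s).deriv]
  rw [mul_pow, mul_pow, neg_pow,
    ← Real.rpow_natCast (Real.cosh ((p-2)/2*s) ^ (-2/(p-2) - 1)) 2,
    ← Real.rpow_mul hch.le]
  rw [show (-2/(p-2) - 1) * ((2:ℕ):ℝ) = 2*(-2/(p-2))-2 by push_cast; ring]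
  ring

noncomputable def Gfun (p : ℝ) (s : ℝ) : ℝ :=
  -(((p/2) ^ (1/(p-2)))^2) * Real.sinh ((p-2)/2*s) *
    Real.cosh ((p-2)/2*s) ^ (2*(-2/(p-2))-1)

lemma hasDerivAt_Gfun {p : ℝ} (hp : 2 < p) (s : ℝ) :
    HasDerivAt (Gfun p)
      ((deriv (vbar p) s)^2 + (vbar p s)^2 - vbar p s ^ p) s := by
  have hch := Real.cosh_pos (x := (p-2)/2*s)
  have hpc : p - 2 ≠ 0 := by intro h; linarith [h]
  have h1 : HasDerivAt (fun s : ℝ => (p-2)/2*s) ((p-2)/2) s := by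
    simpa using (hasDerivAt_id s).const_mul ((p-2)/2)
  have hs := (Real.hasDerivAt_sinh ((p-2)/2*s)).comp s h1
  have hc := (Real.hasDerivAt_cosh ((p-2)/2*s)).comp s h1
  have hr := hc.rpow_const (p := 2*(-2/(p-2))-1)
    (Or.inl (Real.cosh_pos (x := (p-2)/2*s)).ne')
  have hG := (hs.mul hr).const_mul (-(((p/2) ^ (1/(p-2)))^2))
  have hfun : Gfun p = fun x => -(((p/2) ^ (1/(p-2)))^2) *
      (Real.sinh ((p-2)/2*x) * Real.cosh ((p-2)/2*x) ^ (2*(-2/(p-2))-1)) := by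
    funext x; simp only [Gfun]; ring
  rw [hfun]
  refine hG.congr_deriv (Eq.symm ?_)
  simp only [Function.comp_apply]
  rw [sq_deriv_vbar hp s, sq_vbar hp s, rpow_vbar hp s]
  rw [show (2*(-2/(p-2))-1 : ℝ) = (2*(-2/(p-2))-2)+1 by ring]
  rw [show ((2*(-2/(p-2))-2)+1-1 : ℝ) = 2*(-2/(p-2))-2 by ring]
  rw [Real.rpow_add_one hch.ne']
  have hsq : Real.sinh ((p-2)/2*s) ^ 2 = Real.cosh ((p-2)/2*s) ^ 2 - 1 :=
    Real.sinh_sq _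
  have hb : (p-2)/2 * (-2/(p-2)) = -1 := by field_simp
  set K := Real.cosh ((p-2)/2*s) ^ (2*(-2/(p-2))-2) with hK
  set C := ((p:ℝ)/2) ^ (1/(p-2)) with hC
  set ch := Real.cosh ((p-2)/2*s) with hch2
  set sh := Real.sinh ((p-2)/2*s) with hsh
  generalize hbb : (-2/(p-2) : ℝ) = b at hb ⊢
  linear_combination (-(C^2*K*(1+(p-2)/2))) * hsq + (2*C^2*K*sh^2) * hb

lemma cosh_rpow_le {β : ℝ} (hβ : β ≤ 0) (x : ℝ) :
    Real.cosh x ^ β ≤ 2^(-β) * Real.exp (β * x) := by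
  have h1 : Real.exp x / 2 ≤ Real.cosh x := by
    rw [Real.cosh_eq]; have := Real.exp_pos (-x); linarith
  have h2 : Real.cosh x ^ β ≤ (Real.exp x / 2) ^ β :=
    Real.rpow_le_rpow_of_nonpos (by positivity) h1 hβ
  refine h2.trans_eq ?_
  rw [Real.div_rpow (Real.exp_pos x).le (by norm_num),
    Real.rpow_def_of_pos (Real.exp_pos x), Real.log_exp,
    Real.rpow_neg (by norm_num : (0:ℝ) ≤ 2)]
  rw [mul_comm x β]
  field_simp

lemma integrableOn_cosh_rpow {a β : ℝ} (ha : 0 < a) (hβ : β < 0) :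
    IntegrableOn (fun s : ℝ => Real.cosh (a*s) ^ β) (Set.Ioi 0) := by
  have hk : 0 < -(β*a) := by nlinarith
  have hint := ((exp_neg_integrableOn_Ioi 0 hk).const_mul ((2:ℝ)^(-β)))
  apply Integrable.mono' hint
  · refine (Continuous.rpow_const ?_ (fun x => Or.inl (Real.cosh_pos (a*x)).ne')).aestronglyMeasurable
    exact Real.continuous_cosh.comp (continuous_const.mul continuous_id)
  · filter_upwards with s
    rw [Real.norm_eq_abs, abs_of_nonneg (Real.rpow_nonneg (Real.cosh_pos _).le _)]
    have := cosh_rpow_le hβ.le (a*s)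
    simpa [neg_neg, mul_comm, mul_assoc, mul_left_comm] using this

lemma integrableOn_vbar_rpow {p : ℝ} (hp : 2 < p) :
    IntegrableOn (fun s : ℝ => vbar p s ^ p) (Set.Ioi 0) := by
  have ha : 0 < (p-2)/2 := by linarith
  have h0 : 0 < (2:ℝ)/(p-2) := div_pos (by norm_num) (by linarith)
  have hβ : 2*(-2/(p-2))-2 < 0 := by
    rw [neg_div]; nlinarith
  have hint := (integrableOn_cosh_rpow ha hβ).const_mul
    ((((p:ℝ)/2)^(1/(p-2)))^2 * (p/2))
  have heq : (fun s : ℝ => vbar p s ^ p) =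
      fun s => ((((p:ℝ)/2)^(1/(p-2)))^2 * (p/2)) *
        Real.cosh ((p-2)/2*s) ^ (2*(-2/(p-2))-2) :=
    funext fun s => rpow_vbar hp s
  rw [heq]; exact hint

lemma integrableOn_energy {p : ℝ} (hp : 2 < p) :
    IntegrableOn (fun s : ℝ => (deriv (vbar p) s)^2 + vbar p s ^ 2) (Set.Ioi 0) := by
  have ha : 0 < (p-2)/2 := by linarith
  have h0 : 0 < (2:ℝ)/(p-2) := div_pos (by norm_num) (by linarith)
  have hβ : 2*(-2/(p-2)) < 0 := by rw [neg_div]; nlinarith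
  have hlin : Continuous fun s : ℝ => (p-2)/2*s := continuous_const.mul continuous_id
  have hint := (integrableOn_cosh_rpow ha hβ).const_mul (3*(((p:ℝ)/2)^(1/(p-2)))^2)
  apply Integrable.mono' hint
  · have heq : (fun s : ℝ => (deriv (vbar p) s)^2 + vbar p s ^ 2) =
        fun s => (((p:ℝ)/2)^(1/(p-2)))^2 * Real.sinh ((p-2)/2*s) ^ 2 *
            Real.cosh ((p-2)/2*s) ^ (2*(-2/(p-2))-2) +
          (((p:ℝ)/2)^(1/(p-2)))^2 * (Real.cosh ((p-2)/2*s) ^ (2*(-2/(p-2))-2) *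
            Real.cosh ((p-2)/2*s) ^ 2) :=
      funext fun s => by rw [sq_deriv_vbar hp s, sq_vbar hp s]
    rw [heq]
    have hc1 : Continuous fun s : ℝ => Real.cosh ((p-2)/2*s) ^ (2*(-2/(p-2))-2) :=
      Continuous.rpow_const (Real.continuous_cosh.comp hlin)
        (fun x => Or.inl (Real.cosh_pos _).ne')
    exact (((continuous_const.mul ((Real.continuous_sinh.comp hlin).pow 2)).mul hc1).add
      (continuous_const.mul (hc1.mul ((Real.continuous_cosh.comp hlin).pow 2)))).aestronglyMeasurable
  · filter_upwards with s
    have hch := Real.cosh_pos (x := (p-2)/2*s)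
    rw [sq_deriv_vbar hp s, sq_vbar hp s, Real.norm_eq_abs]
    have hK0 : (0:ℝ) ≤ Real.cosh ((p-2)/2*s) ^ (2*(-2/(p-2))-2) :=
      Real.rpow_nonneg hch.le _
    have hKc : Real.cosh ((p-2)/2*s) ^ (2*(-2/(p-2))-2) * Real.cosh ((p-2)/2*s) ^ 2
        = Real.cosh ((p-2)/2*s) ^ (2*(-2/(p-2))) := by
      rw [← Real.rpow_natCast (Real.cosh ((p-2)/2*s)) 2, ← Real.rpow_add hch]
      congr 1; push_cast; ring
    have hsq : Real.sinh ((p-2)/2*s) ^ 2 = Real.cosh ((p-2)/2*s) ^ 2 - 1 :=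
      Real.sinh_sq _
    have hC0 : (0:ℝ) ≤ (((p:ℝ)/2)^(1/(p-2)))^2 := sq_nonneg _
    rw [abs_of_nonneg (by positivity)]
    nlinarith [sq_nonneg (Real.cosh ((p-2)/2*s)), hch, hK0, hKc, hsq, hC0,
      mul_nonneg hC0 hK0]

lemma tendsto_Gfun {p : ℝ} (hp : 2 < p) : Filter.Tendsto (Gfun p) Filter.atTop (nhds 0) := by
  have hpc : p - 2 ≠ 0 := by intro h; linarith [h]
  have h0 : 0 < (2:ℝ)/(p-2) := div_pos (by norm_num) (by linarith)
  have hβ : 2*(-2/(p-2)) < 0 := by rw [neg_div]; nlinarith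
  set C := (((p:ℝ)/2)^(1/(p-2)))^2 with hCdef
  have hC0 : (0:ℝ) ≤ C := sq_nonneg _
  have hneg : 2*(-2/(p-2)) * ((p-2)/2) < 0 := by
    have : 2*(-2/(p-2)) * ((p-2)/2) = -2 := by field_simp
    rw [this]; norm_num
  have htB : Filter.Tendsto (fun s : ℝ => C * (2^(-(2*(-2/(p-2)))) *
      Real.exp ((2*(-2/(p-2)) * ((p-2)/2)) * s))) Filter.atTop (nhds 0) := by
    have h1 : Filter.Tendsto (fun s : ℝ => (2*(-2/(p-2)) * ((p-2)/2)) * s)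
        Filter.atTop Filter.atBot :=
      (Filter.tendsto_const_mul_atBot_of_neg hneg).2 Filter.tendsto_id
    have h2 := Real.tendsto_exp_atBot.comp h1
    have h3 := h2.const_mul (C * 2^(-(2*(-2/(p-2)))))
    simpa [mul_assoc, Function.comp] using h3
  have hbound : ∀ s : ℝ, |Gfun p s| ≤ C * (2^(-(2*(-2/(p-2)))) *
      Real.exp ((2*(-2/(p-2)) * ((p-2)/2)) * s)) := by
    intro s
    have hch := Real.cosh_pos (x := (p-2)/2*s)
    have hstep1 : |Gfun p s| ≤ C * Real.cosh ((p-2)/2*s) ^ (2*(-2/(p-2))) := by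
      have : |Gfun p s| = C * |Real.sinh ((p-2)/2*s)| *
          Real.cosh ((p-2)/2*s) ^ (2*(-2/(p-2))-1) := by
        rw [Gfun, abs_mul, abs_mul, abs_neg, abs_of_nonneg hC0,
          abs_of_nonneg (Real.rpow_nonneg hch.le _)]
      rw [this]
      have habs : |Real.sinh ((p-2)/2*s)| ≤ Real.cosh ((p-2)/2*s) := by
        rw [Real.abs_sinh, ← Real.cosh_abs ((p-2)/2*s)]
        exact (Real.sinh_lt_cosh _).le
      calc C * |Real.sinh ((p-2)/2*s)| * Real.cosh ((p-2)/2*s) ^ ((2*(-2/(p-2))-1))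
          ≤ C * Real.cosh ((p-2)/2*s) * Real.cosh ((p-2)/2*s) ^ ((2*(-2/(p-2))-1)) := by
            apply mul_le_mul_of_nonneg_right _ (Real.rpow_nonneg hch.le _)
            exact mul_le_mul_of_nonneg_left habs hC0
        _ = C * Real.cosh ((p-2)/2*s) ^ ((2*(-2/(p-2))-1)+1) := by
            rw [Real.rpow_add_one hch.ne']; ring
        _ = C * Real.cosh ((p-2)/2*s) ^ (2*(-2/(p-2))) := by
            congr 1; ring
    have hstep2 : Real.cosh ((p-2)/2*s) ^ (2*(-2/(p-2))) ≤
        2^(-(2*(-2/(p-2)))) * Real.exp ((2*(-2/(p-2))) * ((p-2)/2*s)) :=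
      cosh_rpow_le hβ.le _
    calc |Gfun p s| ≤ C * Real.cosh ((p-2)/2*s) ^ (2*(-2/(p-2))) := hstep1
      _ ≤ C * (2^(-(2*(-2/(p-2)))) * Real.exp ((2*(-2/(p-2))) * ((p-2)/2*s))) :=
          mul_le_mul_of_nonneg_left hstep2 hC0
      _ = C * (2^(-(2*(-2/(p-2)))) * Real.exp ((2*(-2/(p-2)) * ((p-2)/2)) * s)) := by
          rw [show (2*(-2/(p-2)):ℝ) * ((p-2)/2*s) = (2*(-2/(p-2)) * ((p-2)/2)) * s by ring]
  refine tendsto_of_tendsto_of_tendsto_of_le_of_le' (neg_zero (G := ℝ) ▸ htB.neg) htB ?_ ?_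
  · filter_upwards with s
    have := hbound s
    have h2 := neg_abs_le (Gfun p s)
    linarith
  · filter_upwards with s
    have := hbound s
    have h2 := le_abs_self (Gfun p s)
    linarith

lemma vbar_pos {p : ℝ} (hp : 2 < p) (s : ℝ) : 0 < vbar p s := by
  rw [vbar_eq]
  exact mul_pos (Real.rpow_pos_of_pos (by linarith) _)
    (Real.rpow_pos_of_pos (Real.cosh_pos _) _)

lemma integral_energy_eq {p : ℝ} (hp : 2 < p) :
    ∫ s in Set.Ioi (0:ℝ), ((deriv (vbar p) s)^2 + vbar p s ^ 2) =
      ∫ s in Set.Ioi (0:ℝ), vbar p s ^ p := by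
  have hFTC := integral_Ioi_of_hasDerivAt_of_tendsto' (a := 0)
    (f := Gfun p) (f' := fun s => (deriv (vbar p) s)^2 + vbar p s ^ 2 - vbar p s ^ p)
    (fun x _ => hasDerivAt_Gfun hp x)
    ((integrableOn_energy hp).sub (integrableOn_vbar_rpow hp)) (tendsto_Gfun hp)
  rw [integral_sub (integrableOn_energy hp) (integrableOn_vbar_rpow hp)] at hFTC
  have hG0 : Gfun p 0 = 0 := by simp [Gfun]
  rw [hG0] at hFTC
  linarith

lemma integral_vbar_pos {p : ℝ} (hp : 2 < p) :
    0 < ∫ s in Set.Ioi (0:ℝ), vbar p s ^ p := by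
  rw [setIntegral_pos_iff_support_of_nonneg_ae ?h1 (integrableOn_vbar_rpow hp)]
  · have hsupp : Function.support (fun s : ℝ => vbar p s ^ p) = Set.univ := by
      ext s
      simp [Function.support, (Real.rpow_pos_of_pos (vbar_pos hp s) p).ne']
    rw [hsupp, Set.univ_inter, Real.volume_Ioi]
    norm_num
  case h1 =>
    filter_upwards with s
    exact (Real.rpow_pos_of_pos (vbar_pos hp s) p).le

lemma integral_vbar_real {p : ℝ} (hp : 2 < p) :
    ∫ s : ℝ, vbar p s ^ p = 2 * ∫ s in Set.Ioi (0:ℝ), vbar p s ^ p := by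
  rw [← integral_comp_abs (f := fun s => vbar p s ^ p)]
  congr 1
  funext s
  have : vbar p |s| = vbar p s := by
    unfold vbar
    rw [show (p-2)*|s|/2 = |(p-2)*s/2| by
      rw [abs_div, abs_mul, abs_of_nonneg (by linarith : (0:ℝ) ≤ p-2)]; norm_num,
      Real.cosh_abs]
  rw [this]

theorem stmt18 (p : ℝ) (hp : 2 < p) (N : ℕ) (hN : 1 ≤ N) :
    ((N : ℝ) * ∫ s in Set.Ioi (0 : ℝ), ((deriv (vbar p) s) ^ 2 + (vbar p s) ^ 2)) /
        ((N : ℝ) * ∫ s in Set.Ioi (0 : ℝ), (vbar p s) ^ p) ^ (2 / p) =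
      ((N : ℝ) / 2) ^ (1 - 2 / p) * (∫ s : ℝ, (vbar p s) ^ p) ^ ((p - 2) / p) ∧
    (3 ≤ N →
      (∫ s : ℝ, (vbar p s) ^ p) ^ ((p - 2) / p) <
        ((N : ℝ) * ∫ s in Set.Ioi (0 : ℝ), ((deriv (vbar p) s) ^ 2 + (vbar p s) ^ 2)) /
          ((N : ℝ) * ∫ s in Set.Ioi (0 : ℝ), (vbar p s) ^ p) ^ (2 / p)) := by
  have h1 := integral_energy_eq hp
  have h2 := integral_vbar_real hp
  have hA := integral_vbar_pos hp
  generalize hAA : (∫ s in Set.Ioi (0:ℝ), vbar p s ^ p) = A at h1 h2 hA ⊢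
  rw [h1, h2]
  have hp0 : (0:ℝ) < p := by linarith
  have hexp : (p-2)/p = 1-2/p := by field_simp
  have hepos : (0:ℝ) < 1-2/p := by
    have : 2/p < 1 := (div_lt_one hp0).2 (by linarith)
    linarith
  have hNpos : (0:ℝ) < N := by
    have : 0 < N := hN
    exact_mod_cast this
  have hT : 0 < (N:ℝ)*A := mul_pos hNpos hA
  have key : ((N:ℝ)*A)^(1-2/p) = (N:ℝ)*A/((N:ℝ)*A)^(2/p) := by
    rw [Real.rpow_sub hT, Real.rpow_one]
  constructor
  · rw [← key, hexp, ← Real.mul_rpow (by positivity) (by linarith : (0:ℝ) ≤ 2*A)]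
    congr 1
    ring
  · intro hN3
    rw [← key, hexp]
    apply Real.rpow_lt_rpow (by linarith : (0:ℝ) ≤ 2*A) _ hepos
    have h3 : (3:ℝ) ≤ (N:ℝ) := by exact_mod_cast hN3
    nlinarith
end
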